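/- arXiv:2507.05374 — 6 statements merged into one kernel-verified Lean document; each statement's English description precedes it below -/
import Mathlib

section
/- Let p be a prime. For every continuous function f : ℤ_p → ℚ_p there exists a unique sequence a : ℕ → ℚ_p with a_n → 0 as n → ∞ such that for every x ∈ ℤ_p the series Σ_{n=0}^∞ a_n · C_n(x) converges to f(x). Moreover, sup_{x ∈ ℤ_p} ‖f(x)‖_p = sup_{n ∈ ℕ} ‖a_n‖_p (both suprema are finite and equal). In other words, the binomial coefficient functions (C_n)_{n∈ℕ} form an orthonormal basis of the ℚ_p-Banach space of continuous functions ℤ_p → ℚ_p with the supremum norm. -/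
/-! The Mahler coefficients of `f` are the iterated forward differences `Δⁿ f (0)`: Mathlib's
`PadicInt.mahlerEquiv` is an isometry `C(ℤ_p, E) ≃ C₀(ℕ, E)` sending `f` to this sequence, with
inverse `PadicInt.mahlerSeries`. It remains to see that `binC p n` is the image in `ℚ_p` of
`Ring.choose · n`, which in a field of characteristic zero is the falling factorial over `n!`. -/

open Filter

namespace Stmt1

variable (p : ℕ) [Fact p.Prime]

/-- The binomial coefficient function `C_n : ℤ_p → ℚ_p`,
`C_n(x) = x (x - 1) ⋯ (x - n + 1) / n!`. -/
noncomputable def binC (n : ℕ) (x : ℤ_[p]) : ℚ_[p] :=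
  (∏ i ∈ Finset.range n, ((x : ℚ_[p]) - (i : ℚ_[p]))) / (n.factorial : ℚ_[p])

open scoped fwdDiff Topology

theorem _root_.Ring.choose_eq_prod_range_div_factorial {K : Type*} [Field K] [CharZero K]
    (a : K) (n : ℕ) : Ring.choose a n = (∏ i ∈ Finset.range n, (a - i)) / n.factorial := by
  rw [Ring.choose_eq_smul, ← Polynomial.aeval_eq_smeval, Polynomial.aeval_def,
    ← Polynomial.eval_map, descPochhammer_map, descPochhammer_eval_eq_prod_range, smul_eq_mul,
    inv_mul_eq_div]

theorem binC_eq_mahler (n : ℕ) (x : ℤ_[p]) : binC p n x = mahler n x := by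
  rw [binC, mahler_apply, ← Ring.choose_eq_prod_range_div_factorial]
  exact (Ring.map_choose PadicInt.Coe.ringHom x n).symm

instance : NormSMulClass ℤ_[p] ℚ_[p] where
  norm_smul r x := by rw [Algebra.smul_def, PadicInt.algebraMap_apply, norm_mul, PadicInt.norm_def]

theorem mul_binC_eq_mahler_smul (a : ℚ_[p]) (n : ℕ) (x : ℤ_[p]) :
    a * binC p n x = mahler n x • a := by
  rw [binC_eq_mahler, Algebra.smul_def, PadicInt.algebraMap_apply, mul_comm]

theorem hasSum_fwdDiff_mul_binC (f : C(ℤ_[p], ℚ_[p])) (x : ℤ_[p]) :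
    HasSum (fun n => Δ_[1] ^[n] f 0 * binC p n x) (f x) := by
  simpa only [mul_binC_eq_mahler_smul, PadicInt.mahlerTerm_apply] using
    ContinuousMap.hasSum_apply (PadicInt.hasSum_mahler f) x

theorem eq_fwdDiff_of_hasSum_mul_binC {f : C(ℤ_[p], ℚ_[p])} {b : ℕ → ℚ_[p]}
    (hb : Tendsto b atTop (𝓝 0)) (hf : ∀ x, HasSum (fun n => b n * binC p n x) (f x)) :
    b = fun n => Δ_[1] ^[n] f 0 := by
  have hseries : PadicInt.mahlerSeries b = f := by
    ext x
    rw [PadicInt.mahlerSeries_apply hb, ← (hf x).tsum_eq]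
    simp only [mul_binC_eq_mahler_smul]
  funext n
  rw [← hseries, PadicInt.fwdDiff_mahlerSeries hb]

theorem _root_.PadicInt.iSup_norm_fwdDiff_iter_eq_norm {E : Type*} [NormedAddCommGroup E]
    [Module ℤ_[p] E] [IsBoundedSMul ℤ_[p] E] [IsUltrametricDist E] [CompleteSpace E]
    (f : C(ℤ_[p], E)) : ⨆ n, ‖Δ_[1] ^[n] f 0‖ = ‖f‖ := by
  rw [← (PadicInt.mahlerEquiv E).norm_map f, ← ZeroAtInftyContinuousMap.norm_toBCF_eq_norm,
    BoundedContinuousFunction.norm_eq_iSup_norm]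
  rfl

/-- **Mahler's theorem.** Every continuous `f : ℤ_p → ℚ_p` has a unique expansion
`f(x) = Σ_n a_n C_n(x)` with `a_n → 0`, and `sup_x ‖f x‖ = sup_n ‖a n‖` (both suprema being
finite): the binomial coefficient functions form an orthonormal basis of `C(ℤ_p, ℚ_p)`. -/
theorem mahler (f : ℤ_[p] → ℚ_[p]) (hf : Continuous f) :
    ∃ a : ℕ → ℚ_[p],
      (Tendsto a atTop (nhds 0) ∧
        ∀ x : ℤ_[p], HasSum (fun n : ℕ => a n * binC p n x) (f x)) ∧
      (∀ b : ℕ → ℚ_[p],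
        (Tendsto b atTop (nhds 0) ∧
          ∀ x : ℤ_[p], HasSum (fun n : ℕ => b n * binC p n x) (f x)) → b = a) ∧
      BddAbove (Set.range fun x : ℤ_[p] => ‖f x‖) ∧
      BddAbove (Set.range fun n : ℕ => ‖a n‖) ∧
      (⨆ x : ℤ_[p], ‖f x‖) = ⨆ n : ℕ, ‖a n‖ := by
  let F : C(ℤ_[p], ℚ_[p]) := ⟨f, hf⟩
  refine ⟨fun n => Δ_[1] ^[n] F 0, ⟨PadicInt.fwdDiff_tendsto_zero F, hasSum_fwdDiff_mul_binC p F⟩,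
    fun b hb => eq_fwdDiff_of_hasSum_mul_binC p hb.1 hb.2, (isCompact_range hf.norm).bddAbove,
    ⟨‖F‖, Set.forall_mem_range.2 (IsUltrametricDist.norm_fwdDiff_iter_apply_le 1 F 0)⟩, ?_⟩
  rw [PadicInt.iSup_norm_fwdDiff_iter_eq_norm, F.norm_eq_iSup_norm]
  rfl

end Stmt1
end

section
/- Let p be a prime and let b : ℕ → ℚ_p be a sequence. The following are equivalent: (i) for every real number r with 0 < r < 1, one has ‖b_n‖_p · r^n → 0 as n → ∞; (ii) for every h ∈ ℕ, the set of real numbers { ‖b_n‖_p · ‖(⌊n/p^h⌋)!‖_p : n ∈ ℕ } is bounded above, where ⌊n/p^h⌋ denotes the integer part of n/p^h. -/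
open Filter

/-! By Legendre's formula, `⌊m/p⌋ ≤ v_p(m!) ≤ m/(p-1)`. Hence `‖⌊n/p^h⌋!‖` lies between
`σ ^ n` and `p * ρ ^ n`, where `ρ = p^(-1/p^(h+1)) < 1` and `σ = p^(-1/((p-1)p^h))` tends to `1`
as `h → ∞`. So decay of `‖b n‖ * ρ ^ n` bounds `‖b n‖ * ‖⌊n/p^h⌋!‖`, and conversely a bound for
one `h` makes `‖b n‖ * r ^ n = ‖b n‖ * σ ^ n * (r/σ) ^ n` decay for every `r < σ`. -/

namespace Stmt3

theorem tendsto_mul_pow_iff_forall_bddAbove_range_mul {a : ℕ → ℝ} {w : ℕ → ℕ → ℝ}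
    (ha : ∀ n, 0 ≤ a n)
    (hw_le : ∀ h, ∃ C ρ : ℝ, 0 < ρ ∧ ρ < 1 ∧ ∀ n, w h n ≤ C * ρ ^ n)
    (hle_w : ∀ σ : ℝ, 0 < σ → σ < 1 → ∃ h, ∀ n, σ ^ n ≤ w h n) :
    (∀ r : ℝ, 0 < r → r < 1 → Tendsto (fun n => a n * r ^ n) atTop (nhds 0)) ↔
      ∀ h, BddAbove (Set.range fun n => a n * w h n) := by
  constructor
  · intro H h
    obtain ⟨C, ρ, hρ0, hρ1, hw⟩ := hw_le h
    obtain ⟨M, hM⟩ := ((H ρ hρ0 hρ1).const_mul C).bddAbove_range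
    refine ⟨M, ?_⟩
    rintro _ ⟨n, rfl⟩
    calc a n * w h n ≤ a n * (C * ρ ^ n) := mul_le_mul_of_nonneg_left (hw n) (ha n)
      _ = C * (a n * ρ ^ n) := by ring
      _ ≤ M := hM ⟨n, rfl⟩
  · intro H r hr0 hr1
    obtain ⟨σ, hrσ, hσ1⟩ := exists_between hr1
    have hσ0 : 0 < σ := hr0.trans hrσ
    obtain ⟨h, hσw⟩ := hle_w σ hσ0 hσ1
    obtain ⟨M, hM⟩ := H h
    have hq : r / σ < 1 := (div_lt_one hσ0).2 hrσ
    have hlim : Tendsto (fun n => M * (r / σ) ^ n) atTop (nhds 0) := by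
      simpa using (tendsto_pow_atTop_nhds_zero_of_lt_one (by positivity) hq).const_mul M
    refine squeeze_zero (fun n => mul_nonneg (ha n) (by positivity)) (fun n => ?_) hlim
    calc a n * r ^ n = a n * σ ^ n * (r / σ) ^ n := by
          rw [mul_assoc, ← mul_pow, mul_div_cancel₀ r hσ0.ne']
      _ ≤ a n * w h n * (r / σ) ^ n := by gcongr; exacts [ha n, hσw n]
      _ ≤ M * (r / σ) ^ n := by gcongr; exact hM ⟨n, rfl⟩

section FactorialNorm

open Nat

variable {p : ℕ} [Fact p.Prime]

theorem norm_factorial_eq_inv_pow (m : ℕ) :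
    ‖(m ! : ℚ_[p])‖ = (p : ℝ)⁻¹ ^ padicValNat p m ! := by
  rw [Padic.norm_eq_zpow_neg_valuation (by exact_mod_cast m.factorial_ne_zero),
    Padic.valuation_natCast, zpow_neg, zpow_natCast, inv_pow]

theorem div_le_padicValNat_factorial (m : ℕ) : m / p ≤ padicValNat p m ! := by
  rw [padicValNat_factorial (b := log p m + 2) (by omega)]
  simpa using Finset.single_le_sum (f := fun i => m / p ^ i) (fun i _ => zero_le _)
    (show 1 ∈ Finset.Ico 1 (log p m + 2) by simp)

theorem exists_norm_factorial_div_pow_le (h : ℕ) :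
    ∃ ρ : ℝ, 0 < ρ ∧ ρ < 1 ∧ ∀ n, ‖((n / p ^ h)! : ℚ_[p])‖ ≤ p * ρ ^ n := by
  have hp : (1 : ℝ) < p := by exact_mod_cast (Fact.out : p.Prime).one_lt
  set Q := p ^ (h + 1)
  have hQ : 0 < Q := pow_pos (Fact.out : p.Prime).pos _
  -- `ρ` is the `Q`-th root of `1/p`, so that `p⁻¹ ^ ⌊n/Q⌋ ≤ p * ρ ^ n`.
  set ρ : ℝ := (p : ℝ)⁻¹ ^ ((Q : ℝ)⁻¹)
  have hρQ : ρ ^ Q = (p : ℝ)⁻¹ := Real.rpow_inv_natCast_pow (by positivity) hQ.ne'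
  have hρ0 : 0 < ρ := by positivity
  have hρ1 : ρ < 1 := by
    refine (pow_lt_one_iff_of_nonneg hρ0.le hQ.ne').1 ?_
    rw [hρQ]; exact inv_lt_one_of_one_lt₀ hp
  refine ⟨ρ, hρ0, hρ1, fun n => ?_⟩
  have hdiv : n / p ^ h / p = n / Q := by rw [Nat.div_div_eq_div_mul, ← pow_succ]
  calc ‖((n / p ^ h)! : ℚ_[p])‖ ≤ (p : ℝ)⁻¹ ^ (n / Q) := by
        rw [norm_factorial_eq_inv_pow, ← hdiv]
        exact pow_le_pow_of_le_one (by positivity) (inv_le_one_of_one_le₀ hp.le)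
          (div_le_padicValNat_factorial _)
    _ = p * (ρ ^ Q) ^ (n / Q + 1) := by
        rw [hρQ, pow_succ, mul_left_comm, mul_inv_cancel₀ (by positivity), mul_one]
    _ ≤ p * ρ ^ n := by
        rw [← pow_mul]
        exact mul_le_mul_of_nonneg_left
          (pow_le_pow_of_le_one hρ0.le hρ1.le (Nat.lt_mul_div_succ n hQ).le) (by positivity)

theorem exists_pow_le_norm_factorial_div_pow {σ : ℝ} (hσ0 : 0 ≤ σ) (hσ1 : σ < 1) :
    ∃ h : ℕ, ∀ n, σ ^ n ≤ ‖((n / p ^ h)! : ℚ_[p])‖ := by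
  have hp := (Fact.out : p.Prime)
  obtain ⟨k, hk⟩ := exists_pow_lt_of_lt_one (inv_pos.2 (by exact_mod_cast hp.pos : (0 : ℝ) < p))
    hσ1
  refine ⟨k, fun n => ?_⟩
  set v := padicValNat p (n / p ^ k)!
  -- Legendre's formula gives `(p - 1) * v ≤ n / p ^ k`.
  have hv : (p - 1) * p ^ k * v ≤ n := by
    calc (p - 1) * p ^ k * v = (p - 1) * v * p ^ k := by ring
      _ ≤ n / p ^ k * p ^ k := by
          gcongr; rw [sub_one_mul_padicValNat_factorial]; exact Nat.sub_le _ _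
      _ ≤ n := Nat.div_mul_le_self n _
  have hk' : k ≤ (p - 1) * p ^ k :=
    (Nat.lt_pow_self hp.one_lt).le.trans (Nat.le_mul_of_pos_left _ (by have := hp.two_le; omega))
  calc σ ^ n ≤ (σ ^ ((p - 1) * p ^ k)) ^ v := by
        rw [← pow_mul]; exact pow_le_pow_of_le_one hσ0 hσ1.le hv
    _ ≤ ((p : ℝ)⁻¹) ^ v := by
        gcongr
        exact (pow_le_pow_of_le_one hσ0 hσ1.le hk').trans hk.le
    _ = ‖((n / p ^ k)! : ℚ_[p])‖ := (norm_factorial_eq_inv_pow _).symm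

end FactorialNorm

/-- A sequence `b : ℕ → ℚ_p` satisfies `‖b n‖ · r ^ n → 0` for every real `0 < r < 1` if and
only if, for every `h ∈ ℕ`, the set of real numbers `‖b n‖ · ‖⌊n/p^h⌋!‖` is bounded above. -/
theorem growth_equivalence (p : ℕ) [Fact p.Prime] (b : ℕ → ℚ_[p]) :
    (∀ r : ℝ, 0 < r → r < 1 →
        Tendsto (fun n : ℕ => ‖b n‖ * r ^ n) atTop (nhds 0)) ↔
      (∀ h : ℕ, BddAbove
        {x : ℝ | ∃ n : ℕ, x = ‖b n‖ * ‖((Nat.factorial (n / p ^ h) : ℚ_[p]))‖}) := by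
  have hrange (h : ℕ) : {x : ℝ | ∃ n : ℕ, x = ‖b n‖ * ‖((Nat.factorial (n / p ^ h) : ℚ_[p]))‖} =
      Set.range fun n => ‖b n‖ * ‖((Nat.factorial (n / p ^ h) : ℚ_[p]))‖ := by
    ext; simp [eq_comm]
  simp only [hrange]
  exact tendsto_mul_pow_iff_forall_bddAbove_range_mul (fun n => norm_nonneg _)
    (fun h => ⟨p, exists_norm_factorial_div_pow_le h⟩)
    (fun σ hσ0 hσ1 => exists_pow_le_norm_factorial_div_pow hσ0.le hσ1)

end Stmt3
end

section
/- Let p be a prime and let R be a commutative topological ring such that the subgroups p^n R (n ∈ ℕ) form a neighbourhood basis of 0 and such that the canonical map R → lim_n R/p^n R is bijective (R is p-adically complete and separated). Let I be a set, equip the product ∏_{i∈I} R with the product topology and the componentwise R-module structure, and let e_i denote the element of ∏_{i∈I} R with i-th component 1 and all other components 0. Then an R-linear map φ : ∏_{i∈I} R → R is continuous if and only if there exists a family a : I → R tending to zero such that for every x ∈ ∏_{i∈I} R the family (a_i · x_i)_{i∈I} is summable in R and φ(x) = Σ_{i∈I} a_i x_i; moreover such a family is unique and is given by a_i = φ(e_i).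 Consequently φ ↦ (φ(e_i))_{i∈I} is a bijection from the set of continuous R-linear maps ∏_{i∈I} R → R onto the set of families I → R tending to zero. -/
open Filter

namespace Stmt8

/-- A family `a : I → R` tends to zero `p`-adically if for every `n` only finitely many of
its members lie outside `p^n R`. -/
def TendsToZero (p : ℕ) {I R : Type*} [CommRing R] (a : I → R) : Prop :=
  ∀ n : ℕ, {i : I | ¬ (p : R) ^ n ∣ a i}.Finite

end Stmt8

/-!
The `p`-adic topology of `R` is its `(p)`-adic topology in the sense of `IsAdic`, so `R` is
Hausdorff, complete and nonarchimedean. For continuous `φ`, applying `φ` to the expansion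
`x = Σ x_i e_i`, which converges in the product topology, gives `φ x = Σ φ(e_i) x_i`; at `x = 1`
this shows that `φ(e_i) → 0`. Conversely, if `a → 0` then `Σ a_i x_i` converges because `R` is
complete and nonarchimedean, and it depends continuously on `x` because all `a_i x_i` lie in
`p^n R` once `x_i ∈ p^n R` for the finitely many `i` with `a_i ∉ p^n R`.
-/

open Topology

lemma Ideal.coe_span_singleton_pow {R : Type*} [CommSemiring R] (ϖ : R) (n : ℕ) :
    ((Ideal.span {ϖ} ^ n : Ideal R) : Set R) = {x | ϖ ^ n ∣ x} := by
  ext x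
  rw [Ideal.span_singleton_pow, SetLike.mem_coe, Ideal.mem_span_singleton, Set.mem_ofPred_eq]

section Adic

variable {R : Type*} [CommRing R] [TopologicalSpace R]

lemma isAdic_span_singleton [IsTopologicalRing R] {ϖ : R}
    (hbasis : (𝓝 (0 : R)).HasBasis (fun _ : ℕ => True) fun n => {x : R | ϖ ^ n ∣ x}) :
    IsAdic (Ideal.span {ϖ}) := by
  simp only [← Ideal.coe_span_singleton_pow] at hbasis
  refine isAdic_iff.2 ⟨fun n => ?_, fun s hs => by simpa using hbasis.mem_iff.1 hs⟩
  exact AddSubgroup.isOpen_of_mem_nhds (Ideal.span {ϖ} ^ n).toAddSubgroup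
    (hbasis.mem_of_mem trivial)

variable {J : Ideal R}

lemma IsAdic.nonarchimedeanRing (hJ : IsAdic J) : NonarchimedeanRing R :=
  hJ ▸ J.nonarchimedean

lemma IsAdic.isClosed_pow [IsTopologicalRing R] (hJ : IsAdic J) (n : ℕ) :
    IsClosed ((J ^ n : Ideal R) : Set R) :=
  AddSubgroup.isClosed_of_isOpen (J ^ n).toAddSubgroup ((isAdic_iff.1 hJ).1 n)

lemma IsAdic.tendsto_mul_of_tendsto_zero (hJ : IsAdic J) {ι : Type*} {l : Filter ι}
    {a : ι → R} (ha : Tendsto a l (𝓝 0)) (x : ι → R) :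
    Tendsto (fun i => a i * x i) l (𝓝 0) := by
  rw [hJ.hasBasis_nhds_zero.tendsto_right_iff] at ha ⊢
  exact fun n _ => (ha n trivial).mono fun i hi => Ideal.mul_mem_right _ _ hi

lemma IsAdic.summable_of_tendsto_cofinite_zero (hJ : IsAdic J) (hJR : IsPrecomplete J R)
    {ι : Type*} {f : ι → R} (hf : Tendsto f cofinite (𝓝 0)) : Summable f := by
  have := hJ.nonarchimedeanRing
  let := IsTopologicalAddGroup.rightUniformSpace R
  have := isUniformAddGroup_of_addCommGroup (G := R)
  have : CompleteSpace R := hJ.isPrecomplete_iff.1 hJR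
  exact NonarchimedeanAddGroup.summable_of_tendsto_cofinite_zero hf

/-- On `(I → R)`, the `J ^ n`-neighbourhood of zero cut out by the finitely many coordinates
where `a i ∉ J ^ n` is mapped into `J ^ n`, since `J ^ n` is a closed ideal. -/
lemma IsAdic.continuous_of_hasSum_mul [IsTopologicalRing R] (hJ : IsAdic J) {I : Type*}
    {a : I → R} (ha : Tendsto a cofinite (𝓝 0)) (φ : (I → R) →ₗ[R] R)
    (hφ : ∀ x, HasSum (fun i => a i * x i) (φ x)) : Continuous φ := by
  refine continuous_of_continuousAt_zero φ ?_
  rw [ContinuousAt, map_zero, hJ.hasBasis_nhds_zero.tendsto_right_iff]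
  intro n _
  have hS : {i | a i ∉ J ^ n}.Finite :=
    eventually_cofinite.1 (hJ.hasBasis_nhds_zero.tendsto_right_iff.1 ha n trivial)
  have hsmall : ∀ᶠ x : I → R in 𝓝 0, ∀ i ∈ hS.toFinset, x i ∈ J ^ n :=
    (eventually_all_finset _).2 fun i _ => (continuous_apply i).continuousAt.preimage_mem_nhds
      (hJ.hasBasis_nhds_zero.mem_of_mem trivial)
  filter_upwards [hsmall] with x hx
  refine (hJ.isClosed_pow n).mem_of_tendsto (hφ x) (Eventually.of_forall fun s => ?_)
  refine Ideal.sum_mem _ fun i _ => ?_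
  by_cases hi : a i ∈ J ^ n
  · exact Ideal.mul_mem_right _ _ hi
  · exact Ideal.mul_mem_left _ _ (hx i (hS.mem_toFinset.2 hi))

end Adic

section Product

variable {R : Type*} [CommRing R] [TopologicalSpace R] {I : Type*} [DecidableEq I]

lemma Pi.hasSum_single {M : Type*} [AddCommMonoid M] [TopologicalSpace M] (x : I → M) :
    HasSum (fun i => Pi.single i (x i)) x :=
  Pi.hasSum.2 fun j => by
    simpa using _root_.hasSum_single (f := fun i => Pi.single i (x i) j) j
      fun i hi => Pi.single_eq_of_ne hi.symm _

lemma hasSum_apply_single_mul_of_continuous (φ : (I → R) →ₗ[R] R) (hφ : Continuous φ)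
    (x : I → R) : HasSum (fun i => φ (Pi.single i 1) * x i) (φ x) := by
  refine ((Pi.hasSum_single x).map φ hφ).congr_fun fun i => ?_
  rw [Function.comp_apply, mul_comm, ← smul_eq_mul, ← map_smul, ← Pi.single_smul', smul_eq_mul,
    mul_one]

lemma eq_apply_single_of_hasSum [T2Space R] (φ : (I → R) →ₗ[R] R) (a : I → R)
    (hφ : ∀ x, HasSum (fun i => a i * x i) (φ x)) : a = fun i => φ (Pi.single i 1) := by
  funext i
  refine HasSum.unique ?_ (hφ (Pi.single i 1))
  have h : (fun j => a j * (Pi.single i 1 : I → R) j) = Pi.single i (a i) := by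
    rw [← mul_one (a i), Pi.single_mul_right]
    rfl
  rw [h]
  exact hasSum_pi_single i (a i)

lemma ext_apply_single_of_continuous [T2Space R] {φ ψ : (I → R) →ₗ[R] R} (hφ : Continuous φ)
    (hψ : Continuous ψ) (h : ∀ i, φ (Pi.single i 1) = ψ (Pi.single i 1)) : φ = ψ :=
  LinearMap.ext fun x => (hasSum_apply_single_mul_of_continuous φ hφ x).unique <|
    (hasSum_apply_single_mul_of_continuous ψ hψ x).congr_fun fun i => by rw [h]

lemma tendsto_apply_single_of_continuous [IsTopologicalRing R] (φ : (I → R) →ₗ[R] R)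
    (hφ : Continuous φ) : Tendsto (fun i => φ (Pi.single i 1)) cofinite (𝓝 0) := by
  simpa using (hasSum_apply_single_mul_of_continuous φ hφ 1).summable.tendsto_cofinite_zero

end Product

section Pairing

variable {R : Type*} [CommRing R] [TopologicalSpace R] [IsTopologicalRing R] [T2Space R]
  {I : Type*}

noncomputable def tsumPairing (a : I → R) (ha : ∀ x : I → R, Summable fun i => a i * x i) :
    (I → R) →ₗ[R] R where
  toFun x := ∑' i, a i * x i
  map_add' x y := by
    simp only [Pi.add_apply, mul_add]
    exact (ha x).tsum_add (ha y)
  map_smul' r x := by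
    simp only [Pi.smul_apply, smul_eq_mul, mul_left_comm _ r, RingHom.id_apply]
    exact (ha x).tsum_mul_left r

lemma hasSum_tsumPairing (a : I → R) (ha : ∀ x : I → R, Summable fun i => a i * x i)
    (x : I → R) : HasSum (fun i => a i * x i) (tsumPairing a ha x) :=
  (ha x).hasSum

end Pairing

namespace Stmt8

lemma tendsToZero_iff_tendsto_cofinite {p : ℕ} {R : Type*} [CommRing R] [TopologicalSpace R]
    (hbasis : (𝓝 (0 : R)).HasBasis (fun _ : ℕ => True) fun n => {x : R | (p : R) ^ n ∣ x})
    {I : Type*} (a : I → R) : TendsToZero p a ↔ Tendsto a cofinite (𝓝 0) := by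
  simp only [hbasis.tendsto_right_iff, eventually_cofinite, Set.mem_ofPred_eq, true_implies]
  rfl

theorem continuous_dual_of_product_general
    (p : ℕ)
    (R : Type*) [CommRing R] [TopologicalSpace R] [IsTopologicalRing R]
    (hbasis : (nhds (0 : R)).HasBasis (fun _ : ℕ => True)
      (fun n => {x : R | (p : R) ^ n ∣ x}))
    (hcomplete : IsAdicComplete (Ideal.span {(p : R)}) R)
    (I : Type*) [DecidableEq I] :
    (∀ φ : (I → R) →ₗ[R] R,
      (Continuous φ ↔
        ∃ a : I → R, TendsToZero p a ∧
          ∀ x : I → R, HasSum (fun i : I => a i * x i) (φ x))) ∧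
    (∀ φ : (I → R) →ₗ[R] R, Continuous φ →
      ∀ a : I → R,
        (TendsToZero p a ∧ ∀ x : I → R, HasSum (fun i : I => a i * x i) (φ x)) →
          a = fun i : I => φ (Pi.single i 1)) ∧
    Set.BijOn (fun (φ : (I → R) →ₗ[R] R) (i : I) => φ (Pi.single i 1))
      {φ : (I → R) →ₗ[R] R | Continuous φ}
      {a : I → R | TendsToZero p a} := by
  have hJ := isAdic_span_singleton hbasis
  have : T2Space R := hJ.isHausdorff_iff.1 hcomplete.toIsHausdorff
  have hzero := tendsToZero_iff_tendsto_cofinite hbasis (I := I)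
  have hsingle (φ : (I → R) →ₗ[R] R) (hφ : Continuous φ) :
      TendsToZero p fun i => φ (Pi.single i 1) :=
    (hzero _).2 (tendsto_apply_single_of_continuous φ hφ)
  have hcont (φ : (I → R) →ₗ[R] R) (a : I → R) (ha : TendsToZero p a)
      (hφ : ∀ x, HasSum (fun i => a i * x i) (φ x)) : Continuous φ := by
    exact hJ.continuous_of_hasSum_mul ((hzero a).1 ha) φ hφ
  refine ⟨fun φ => ⟨fun hφ => ⟨_, hsingle φ hφ, hasSum_apply_single_mul_of_continuous φ hφ⟩,
    fun ⟨a, ha, hφ⟩ => hcont φ a ha hφ⟩, fun φ _ a h => eq_apply_single_of_hasSum φ a h.2, ⟨hsingle, ?_, ?_⟩⟩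
  · exact fun φ hφ ψ hψ h => ext_apply_single_of_continuous hφ hψ (congrFun h)
  · intro a ha
    have hsum (x : I → R) : Summable fun i => a i * x i :=
      hJ.summable_of_tendsto_cofinite_zero hcomplete.toIsPrecomplete
        (hJ.tendsto_mul_of_tendsto_zero ((hzero a).1 ha) x)
    have hφ := hasSum_tsumPairing a hsum
    exact ⟨tsumPairing a hsum, hcont _ a ha hφ, (eq_apply_single_of_hasSum _ a hφ).symm⟩

/-- Let `R` be a `p`-adically complete and separated topological ring whose topology is the
`p`-adic one. An `R`-linear map `φ : ∏_I R → R` is continuous (for the product topology) if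
and only if there is a family `a : I → R` tending to zero with `φ x = Σ_i a_i x_i` (a
summable family) for all `x`; such a family is unique, given by `a_i = φ(e_i)`; and
`φ ↦ (φ(e_i))_i` is a bijection from the continuous `R`-linear maps onto the families
tending to zero. -/
theorem continuous_dual_of_product
    (p : ℕ) [Fact p.Prime]
    (R : Type*) [CommRing R] [TopologicalSpace R] [IsTopologicalRing R]
    (hbasis : (nhds (0 : R)).HasBasis (fun _ : ℕ => True)
      (fun n => {x : R | (p : R) ^ n ∣ x}))
    (hcomplete : IsAdicComplete (Ideal.span {(p : R)}) R)
    (I : Type*) [DecidableEq I] :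
    (∀ φ : (I → R) →ₗ[R] R,
      (Continuous φ ↔
        ∃ a : I → R, TendsToZero p a ∧
          ∀ x : I → R, HasSum (fun i : I => a i * x i) (φ x))) ∧
    (∀ φ : (I → R) →ₗ[R] R, Continuous φ →
      ∀ a : I → R,
        (TendsToZero p a ∧ ∀ x : I → R, HasSum (fun i : I => a i * x i) (φ x)) →
          a = fun i : I => φ (Pi.single i 1)) ∧
    Set.BijOn (fun (φ : (I → R) →ₗ[R] R) (i : I) => φ (Pi.single i 1))
      {φ : (I → R) →ₗ[R] R | Continuous φ}
      {a : I → R | TendsToZero p a} :=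
  continuous_dual_of_product_general p R hbasis hcomplete I

end Stmt8
end

section
/- Let p be a prime and let R be a commutative topological ring such that the subgroups p^n R (n ∈ ℕ) form a neighbourhood basis of 0 and such that the canonical map R → lim_n R/p^n R is bijective (R is p-adically complete and separated). Let I be a set and let c₀(I,R) := { a : I → R : a tends to zero }, an R-submodule of ∏_{i∈I} R; equip c₀(I,R) with the topology for which the subgroups { a ∈ c₀(I,R) : a_i ∈ p^n R for all i ∈ I } (n ∈ ℕ) form a neighbourhood basis of 0. Then for every b ∈ ∏_{i∈I} R and every x ∈ c₀(I,R) the family (b_i · x_i)_{i∈I} is summable in R, and the map ∏_{i∈I} R → Hom_R(c₀(I,R), R) sending b to the functional x ↦ Σ_{i∈I} b_i x_i is a bijection onto the set of R-linear maps c₀(I,R) → R that are continuous for the above topology on c₀(I,R) and the p-adic topology on R. -/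
/-!
The partial sums of a family tending to zero over the finite sets `{i | ¬ ϖ ^ n ∣ fᵢ}` form a
`ϖ`-adic Cauchy sequence; its limit `L` is the sum of the family, and it agrees modulo `ϖ ^ n` with
the partial sum over any finite set off which all terms are divisible by `ϖ ^ n`. Taking the empty
set, `x ↦ Σ bᵢ xᵢ` maps the `n`-th basic neighbourhood of `c₀(I, R)` into `p ^ n R`, so it is
continuous. Conversely, a continuous functional `g` is `x ↦ Σ g(eᵢ) xᵢ`: modulo any `p ^ m`,
`g x` agrees with `g` of a finite truncation of `x`, which is a finite partial sum of
`Σ g(eᵢ) xᵢ`, and `R` is `p`-adically separated.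
-/

open Filter Topology

namespace Stmt9

/-- The `R`-module `c₀(I, R)` of families `I → R` tending to zero `p`-adically: the
`p`-adic completion of the direct sum `⊕_I R`, inside `∏_I R`. -/
def c0 (p : ℕ) (R : Type*) [CommRing R] (I : Type*) : Submodule R (I → R) where
  carrier := {a : I → R | ∀ n : ℕ, {i : I | ¬ (p : R) ^ n ∣ a i}.Finite}
  zero_mem' := by
    intro n
    refine Set.Finite.subset Set.finite_empty ?_
    intro i hi
    simp only [Set.mem_setOf_eq, Pi.zero_apply] at hi
    exact absurd (dvd_zero _) hi
  add_mem' := by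
    intro a b ha hb
    simp only [Set.mem_setOf_eq] at ha hb ⊢
    intro n
    refine ((ha n).union (hb n)).subset ?_
    intro i hi
    simp only [Set.mem_setOf_eq, Pi.add_apply] at hi
    by_contra hc
    simp only [Set.mem_union, Set.mem_setOf_eq, not_or, not_not] at hc
    exact hi (dvd_add hc.1 hc.2)
  smul_mem' := by
    intro r a ha
    simp only [Set.mem_setOf_eq] at ha ⊢
    intro n
    refine (ha n).subset ?_
    intro i hi
    simp only [Set.mem_setOf_eq, Pi.smul_apply, smul_eq_mul] at hi
    simp only [Set.mem_setOf_eq]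
    intro hdvd
    exact hi (hdvd.mul_left r)

section Adic

variable {R : Type*} [CommRing R] {ϖ : R}

theorem mem_span_singleton_pow_smul_top {y : R} {n : ℕ} :
    y ∈ (Ideal.span {ϖ} ^ n • ⊤ : Submodule R R) ↔ ϖ ^ n ∣ y := by
  rw [smul_eq_mul, Ideal.mul_top, Ideal.span_singleton_pow, Ideal.mem_span_singleton]

theorem eq_of_forall_pow_dvd_sub (h : IsHausdorff (Ideal.span {ϖ}) R) {x y : R}
    (hxy : ∀ n, ϖ ^ n ∣ x - y) : x = y :=
  sub_eq_zero.mp <| h.haus _ fun n => by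
    rw [SModEq.zero, mem_span_singleton_pow_smul_top]
    exact hxy n

theorem exists_forall_pow_dvd_sub (h : IsPrecomplete (Ideal.span {ϖ}) R) {P : ℕ → R}
    (hP : ∀ {m n}, m ≤ n → ϖ ^ m ∣ P n - P m) : ∃ L, ∀ n, ϖ ^ n ∣ L - P n := by
  obtain ⟨L, hL⟩ := h.prec' P fun hmn => by
    rw [SModEq.sub_mem, mem_span_singleton_pow_smul_top, ← dvd_neg, neg_sub]
    exact hP hmn
  refine ⟨L, fun n => ?_⟩
  have := hL n
  rwa [SModEq.sub_mem, mem_span_singleton_pow_smul_top, ← dvd_neg, neg_sub] at this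

variable {I : Type*}

theorem dvd_sum_sub_sum {a : R} {f : I → R} {S T : Finset I}
    (hS : ∀ i ∉ S, a ∣ f i) (hT : ∀ i ∉ T, a ∣ f i) : a ∣ ∑ i ∈ T, f i - ∑ i ∈ S, f i := by
  classical
  rw [← Finset.sum_sdiff_sub_sum_sdiff]
  exact dvd_sub (Finset.dvd_sum fun i hi => hS i (Finset.mem_sdiff.1 hi).2)
    (Finset.dvd_sum fun i hi => hT i (Finset.mem_sdiff.1 hi).2)

theorem exists_pow_dvd_sub_sum (hprec : IsPrecomplete (Ideal.span {ϖ}) R) {f : I → R}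
    (hf : ∀ n, {i | ¬ ϖ ^ n ∣ f i}.Finite) :
    ∃ L, ∀ n (T : Finset I), (∀ i ∉ T, ϖ ^ n ∣ f i) → ϖ ^ n ∣ L - ∑ i ∈ T, f i := by
  have hS : ∀ n, ∀ i ∉ (hf n).toFinset, ϖ ^ n ∣ f i := fun n i hi => by simpa using hi
  obtain ⟨L, hL⟩ := exists_forall_pow_dvd_sub hprec (P := fun n => ∑ i ∈ (hf n).toFinset, f i)
    fun hmn => dvd_sum_sub_sum (hS _) fun i hi => (pow_dvd_pow ϖ hmn).trans (hS _ i hi)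
  refine ⟨L, fun n T hT => ?_⟩
  rw [← sub_add_sub_cancel L (∑ i ∈ (hf n).toFinset, f i)]
  exact dvd_add (hL n) (dvd_sum_sub_sum hT (hS n))

variable [TopologicalSpace R] [IsTopologicalAddGroup R]

theorem t2Space_of_isHausdorff
    (hbasis : (𝓝 (0 : R)).HasBasis (fun _ : ℕ => True) (fun n => {x : R | ϖ ^ n ∣ x}))
    (hhaus : IsHausdorff (Ideal.span {ϖ}) R) : T2Space R :=
  IsTopologicalAddGroup.t2Space_of_zero_sep fun x hx => by
    obtain ⟨n, hn⟩ : ∃ n, ¬ ϖ ^ n ∣ x := by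
      by_contra! h
      exact hx (eq_of_forall_pow_dvd_sub hhaus (by simpa using h))
    exact ⟨_, hbasis.mem_of_mem trivial, hn⟩

theorem hasSum_of_forall_pow_dvd_sub_sum
    (hbasis : (𝓝 (0 : R)).HasBasis (fun _ : ℕ => True) (fun n => {x : R | ϖ ^ n ∣ x}))
    {f : I → R} (hf : ∀ n, {i | ¬ ϖ ^ n ∣ f i}.Finite) {L : R}
    (hL : ∀ n (T : Finset I), (∀ i ∉ T, ϖ ^ n ∣ f i) → ϖ ^ n ∣ L - ∑ i ∈ T, f i) :
    HasSum f L := by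
  rw [HasSum, ← tendsto_sub_nhds_zero_iff, hbasis.tendsto_right_iff]
  refine fun n _ => eventually_atTop.2 ⟨(hf n).toFinset, fun T hT => ?_⟩
  rw [Set.mem_ofPred_eq, ← dvd_neg, neg_sub]
  exact hL n T fun i hi => not_not.1 fun h => hi (hT (by simpa using h))

theorem summable_of_finite_not_pow_dvd
    (hbasis : (𝓝 (0 : R)).HasBasis (fun _ : ℕ => True) (fun n => {x : R | ϖ ^ n ∣ x}))
    (hprec : IsPrecomplete (Ideal.span {ϖ}) R) {f : I → R}
    (hf : ∀ n, {i | ¬ ϖ ^ n ∣ f i}.Finite) : Summable f :=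
  let ⟨_, hL⟩ := exists_pow_dvd_sub_sum hprec hf
  ⟨_, hasSum_of_forall_pow_dvd_sub_sum hbasis hf hL⟩

theorem pow_dvd_tsum_sub_sum [T2Space R]
    (hbasis : (𝓝 (0 : R)).HasBasis (fun _ : ℕ => True) (fun n => {x : R | ϖ ^ n ∣ x}))
    (hprec : IsPrecomplete (Ideal.span {ϖ}) R) {f : I → R}
    (hf : ∀ n, {i | ¬ ϖ ^ n ∣ f i}.Finite) {n : ℕ} {T : Finset I}
    (hT : ∀ i ∉ T, ϖ ^ n ∣ f i) : ϖ ^ n ∣ ∑' i, f i - ∑ i ∈ T, f i := by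
  obtain ⟨L, hL⟩ := exists_pow_dvd_sub_sum hprec hf
  rw [(hasSum_of_forall_pow_dvd_sub_sum hbasis hf hL).tsum_eq]
  exact hL n T hT

end Adic

namespace c0

variable {p : ℕ} {R : Type*} [CommRing R] {I : Type*}

theorem finite_not_pow_dvd_mul (b : I → R) (x : c0 p R I) (n : ℕ) :
    {i | ¬ (p : R) ^ n ∣ b i * (x : I → R) i}.Finite :=
  (x.2 n).subset fun _ hi h => hi (h.mul_left _)

section Single

variable [DecidableEq I]

def single (i : I) : c0 p R I :=
  ⟨Pi.single i 1, fun _ => (Set.finite_singleton i).subset fun j hj => by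
    by_contra hji
    exact hj (by simp [show j ≠ i from hji])⟩

theorem coe_sum_smul_single (x : I → R) (T : Finset I) :
    ((∑ i ∈ T, x i • single i : c0 p R I) : I → R) = fun j => if j ∈ T then x j else 0 := by
  ext j
  simp [single, Finset.sum_apply, Pi.single_apply]

theorem tsum_mul_single [TopologicalSpace R] (b : I → R) (i : I) :
    ∑' j, b j * ((single i : c0 p R I) : I → R) j = b i := by
  have : (fun j => b j * (Pi.single i 1 : I → R) j) = Pi.single i (b i) := by
    ext j
    by_cases h : j = i <;> simp [h]
  simp only [single, this, tsum_pi_single]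

end Single

variable [TopologicalSpace R] [IsTopologicalAddGroup R]

theorem summable_mul
    (hbasis : (𝓝 (0 : R)).HasBasis (fun _ : ℕ => True) (fun n => {x : R | (p : R) ^ n ∣ x}))
    (hprec : IsPrecomplete (Ideal.span {(p : R)}) R) (b : I → R) (x : c0 p R I) :
    Summable fun i => b i * (x : I → R) i :=
  summable_of_finite_not_pow_dvd hbasis hprec (finite_not_pow_dvd_mul b x)

variable [T2Space R]

theorem tsum_mul_add
    (hbasis : (𝓝 (0 : R)).HasBasis (fun _ : ℕ => True) (fun n => {x : R | (p : R) ^ n ∣ x}))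
    (hprec : IsPrecomplete (Ideal.span {(p : R)}) R) (b : I → R) (x y : c0 p R I) :
    ∑' i, b i * ((x + y : c0 p R I) : I → R) i =
      ∑' i, b i * (x : I → R) i + ∑' i, b i * (y : I → R) i := by
  simp only [Submodule.coe_add, Pi.add_apply, mul_add]
  exact (summable_mul hbasis hprec b x).tsum_add (summable_mul hbasis hprec b y)

theorem tsum_mul_smul [ContinuousMul R]
    (hbasis : (𝓝 (0 : R)).HasBasis (fun _ : ℕ => True) (fun n => {x : R | (p : R) ^ n ∣ x}))
    (hprec : IsPrecomplete (Ideal.span {(p : R)}) R) (b : I → R) (r : R) (x : c0 p R I) :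
    ∑' i, b i * ((r • x : c0 p R I) : I → R) i = r * ∑' i, b i * (x : I → R) i := by
  simp only [Submodule.coe_smul, Pi.smul_apply, smul_eq_mul, mul_left_comm (b _) r]
  exact ((summable_mul hbasis hprec b x).hasSum.map (AddMonoidHom.mulLeft r)
    (continuous_const_mul r)).tsum_eq

theorem continuous_tsum_mul [TopologicalSpace (c0 p R I)] [IsTopologicalAddGroup (c0 p R I)]
    (hbasis : (𝓝 (0 : R)).HasBasis (fun _ : ℕ => True) (fun n => {x : R | (p : R) ^ n ∣ x}))
    (hprec : IsPrecomplete (Ideal.span {(p : R)}) R)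
    (hbasis₀ : (𝓝 (0 : c0 p R I)).HasBasis (fun _ : ℕ => True)
      (fun n => {a : c0 p R I | ∀ i, (p : R) ^ n ∣ (a : I → R) i}))
    (b : I → R) : Continuous fun x : c0 p R I => ∑' i, b i * (x : I → R) i := by
  let F : c0 p R I →+ R :=
    AddMonoidHom.mk' (fun x => ∑' i, b i * (x : I → R) i) (tsum_mul_add hbasis hprec b)
  refine continuous_of_tendsto_nhds_zero F
    ((hbasis₀.tendsto_iff hbasis).2 fun n _ => ⟨n, trivial, fun a ha => ?_⟩)
  simpa [F] using pow_dvd_tsum_sub_sum hbasis hprec (finite_not_pow_dvd_mul b a) (T := ∅)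
    fun i _ => (ha i).mul_left _

theorem apply_eq_tsum_mul_apply_single [DecidableEq I] [TopologicalSpace (c0 p R I)]
    (hbasis : (𝓝 (0 : R)).HasBasis (fun _ : ℕ => True) (fun n => {x : R | (p : R) ^ n ∣ x}))
    (hcomplete : IsAdicComplete (Ideal.span {(p : R)}) R)
    (hbasis₀ : (𝓝 (0 : c0 p R I)).HasBasis (fun _ : ℕ => True)
      (fun n => {a : c0 p R I | ∀ i, (p : R) ^ n ∣ (a : I → R) i}))
    (g : c0 p R I →ₗ[R] R) (hg : Continuous g) (x : c0 p R I) :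
    g x = ∑' i, g (single i) * (x : I → R) i := by
  refine eq_of_forall_pow_dvd_sub hcomplete.toIsHausdorff fun m => ?_
  obtain ⟨n, -, hn⟩ := (hbasis₀.tendsto_iff hbasis).1 (by simpa using hg.tendsto 0) m trivial
  obtain ⟨T, hT⟩ : ∃ T : Finset I, ∀ i ∉ T, (p : R) ^ max m n ∣ (x : I → R) i :=
    ⟨(x.2 _).toFinset, fun i hi => by simpa using hi⟩
  have htrunc : (p : R) ^ m ∣ g x - ∑ i ∈ T, g (single i) * (x : I → R) i := by
    have hsub : g x - ∑ i ∈ T, g (single i) * (x : I → R) i =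
        g (x - ∑ i ∈ T, (x : I → R) i • single i) := by
      simp [map_sum, mul_comm]
    refine hsub ▸ hn _ fun i => ?_
    rw [Submodule.coe_sub, coe_sum_smul_single, Pi.sub_apply]
    split_ifs with hi
    · simp
    · simpa using (pow_dvd_pow _ (le_max_right m n)).trans (hT i hi)
  have htsum : (p : R) ^ m ∣ ∑' i, g (single i) * (x : I → R) i -
      ∑ i ∈ T, g (single i) * (x : I → R) i :=
    pow_dvd_tsum_sub_sum hbasis hcomplete.toIsPrecomplete (finite_not_pow_dvd_mul _ x)
      fun i hi => ((pow_dvd_pow _ (le_max_left m n)).trans (hT i hi)).mul_left _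
  simpa using dvd_sub htrunc htsum

end c0

theorem dual_of_completed_direct_sum_general
    (p : ℕ)
    (R : Type*) [CommRing R] [TopologicalSpace R] [IsTopologicalRing R]
    (hbasis : (nhds (0 : R)).HasBasis (fun _ : ℕ => True)
      (fun n => {x : R | (p : R) ^ n ∣ x}))
    (hcomplete : IsAdicComplete (Ideal.span {(p : R)}) R)
    (I : Type*)
    (τ : TopologicalSpace (c0 p R I))
    (hτgroup : @IsTopologicalAddGroup (c0 p R I) τ _)
    (hτbasis : (@nhds _ τ (0 : c0 p R I)).HasBasis (fun _ : ℕ => True)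
      (fun n => {a : c0 p R I | ∀ i : I, (p : R) ^ n ∣ (a : I → R) i})) :
    (∀ (b : I → R) (x : c0 p R I), Summable (fun i : I => b i * (x : I → R) i)) ∧
    Set.BijOn
      (fun (b : I → R) (x : c0 p R I) => ∑' i : I, b i * (x : I → R) i)
      Set.univ
      {g : c0 p R I → R |
        (∀ x y : c0 p R I, g (x + y) = g x + g y) ∧
        (∀ (r : R) (x : c0 p R I), g (r • x) = r * g x) ∧
        @Continuous _ _ τ _ g} := by
  classical
  let _ := τ
  have := t2Space_of_isHausdorff hbasis hcomplete.toIsHausdorff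
  have hprec := hcomplete.toIsPrecomplete
  refine ⟨c0.summable_mul hbasis hprec, fun b _ => ⟨c0.tsum_mul_add hbasis hprec b,
    c0.tsum_mul_smul hbasis hprec b, c0.continuous_tsum_mul hbasis hprec hτbasis b⟩,
    fun b _ b' _ h => funext fun i => ?_, fun g ⟨hadd, hsmul, hcont⟩ => ?_⟩
  · simpa only [c0.tsum_mul_single] using congrFun h (c0.single i)
  · let G : c0 p R I →ₗ[R] R := ⟨⟨g, hadd⟩, hsmul⟩
    exact ⟨fun i => g (c0.single i), trivial,
      funext fun x => (c0.apply_eq_tsum_mul_apply_single hbasis hcomplete hτbasis G hcont x).symm⟩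

/-- Let `R` be a `p`-adically complete and separated topological ring whose topology is the
`p`-adic one, and equip `c₀(I,R)` with (the unique group) topology `τ` in which the
subgroups `{a | ∀ i, a_i ∈ p^n R}` form a neighbourhood basis of `0`. Then for every
`b ∈ ∏_I R` and `x ∈ c₀(I,R)` the family `(b_i x_i)` is summable, and `b ↦ (x ↦ Σ_i b_i x_i)`
is a bijection from `∏_I R` onto the set of `τ`-continuous `R`-linear maps `c₀(I,R) → R`. -/
theorem dual_of_completed_direct_sum
    (p : ℕ) [Fact p.Prime]
    (R : Type*) [CommRing R] [TopologicalSpace R] [IsTopologicalRing R]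
    (hbasis : (nhds (0 : R)).HasBasis (fun _ : ℕ => True)
      (fun n => {x : R | (p : R) ^ n ∣ x}))
    (hcomplete : IsAdicComplete (Ideal.span {(p : R)}) R)
    (I : Type*)
    (τ : TopologicalSpace (c0 p R I))
    (hτgroup : @IsTopologicalAddGroup (c0 p R I) τ _)
    (hτbasis : (@nhds _ τ (0 : c0 p R I)).HasBasis (fun _ : ℕ => True)
      (fun n => {a : c0 p R I | ∀ i : I, (p : R) ^ n ∣ (a : I → R) i})) :
    (∀ (b : I → R) (x : c0 p R I), Summable (fun i : I => b i * (x : I → R) i)) ∧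
    Set.BijOn
      (fun (b : I → R) (x : c0 p R I) => ∑' i : I, b i * (x : I → R) i)
      Set.univ
      {g : c0 p R I → R |
        (∀ x y : c0 p R I, g (x + y) = g x + g y) ∧
        (∀ (r : R) (x : c0 p R I), g (r • x) = r * g x) ∧
        @Continuous _ _ τ _ g} :=
  dual_of_completed_direct_sum_general p R hbasis hcomplete I τ hτgroup hτbasis

end Stmt9
end

section
/- Fix a prime p. Let N be a topological abelian group such that: multiplication by p on N is injective (N is p-torsion-free); the subgroups p^n N (n ∈ ℕ) form a neighbourhood basis of 0; and the canonical map N → lim_n N/p^n N is bijective (N is p-adically complete and separated). Let S be a profinite topological space and let C(S,N) denote the abelian group of continuous maps S → N, equipped with the compact-open topology. Then the subgroups p^n · C(S,N) (n ∈ ℕ) form a neighbourhood basis of 0 in C(S,N); that is, the compact-open topology on C(S,N) coincides with the p-adic topology. -/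
/-!
Since `p ^ n • N` is open and `p` is injective on `N`, multiplication by `p ^ n` is an open
embedding of `N` onto `p ^ n • N`; hence a continuous map `S → N` with values in `p ^ n • N` is
`p ^ n` times a continuous map. For compact `S`, the sets `{f | f(S) ⊆ p ^ n • N}` form a basis
of neighbourhoods of `0` in the compact-open topology, and these are the sets `p ^ n • C(S, N)`.
-/

open Filter Topology Set

namespace Stmt10

section CompactOpen

variable {X Y : Type*} [TopologicalSpace X] [TopologicalSpace Y]

theorem hasBasis_nhds_const_of_compactSpace [CompactSpace X] {ι : Type*} {c : Y}
    {q : ι → Prop} {U : ι → Set Y} (h : (𝓝 c).HasBasis q U) :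
    (𝓝 (ContinuousMap.const X c)).HasBasis q fun i => {f : C(X, Y) | ∀ x, f x ∈ U i} :=
  h.nhds_continuousMapConst.to_hasBasis
    (fun Ki hKi => ⟨Ki.2, hKi.2, fun _ hf x _ => hf x⟩)
    (fun i hi => ⟨(univ, i), ⟨isCompact_univ, hi⟩, fun _ hf x => hf (mem_univ x)⟩)

theorem exists_continuousMap_lift_iff {Z : Type*} [TopologicalSpace Z] {e : Y → Z}
    (he : IsInducing e) (f : C(X, Z)) :
    (∀ x, ∃ y, f x = e y) ↔ ∃ g : C(X, Y), ∀ x, f x = e (g x) := by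
  refine ⟨fun hf => ?_, fun ⟨g, hg⟩ x => ⟨g x, hg x⟩⟩
  choose g hg using hf
  have hcomp : e ∘ g = f := funext fun x => (hg x).symm
  exact ⟨⟨g, he.continuous_iff.2 (hcomp ▸ f.continuous)⟩, hg⟩

end CompactOpen

section PAdic

variable {N : Type*} [AddCommGroup N] [TopologicalSpace N] [IsTopologicalAddGroup N] {p : ℕ}

theorem isOpenMap_pow_nsmul
    (hbasis : (𝓝 (0 : N)).HasBasis (fun _ : ℕ => True)
      (fun n => {x : N | ∃ y : N, x = p ^ n • y})) (k : ℕ) :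
    IsOpenMap fun x : N => p ^ k • x := by
  let f : N →+ N := DistribSMul.toAddMonoidHom N (p ^ k)
  refine IsTopologicalAddGroup.isOpenMap_iff_nhds_zero (f := f) |>.2 <|
    (hbasis.map f).ge_iff.2 fun n _ => ?_
  have himage : f '' {x | ∃ y, x = p ^ n • y} = {x | ∃ y, x = p ^ (k + n) • y} := by
    ext x
    simp [f, pow_add, mul_smul, eq_comm]
  exact himage ▸ hbasis.mem_of_mem trivial

theorem isInducing_pow_nsmul (htf : Function.Injective fun x : N => p • x)
    (hbasis : (𝓝 (0 : N)).HasBasis (fun _ : ℕ => True)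
      (fun n => {x : N | ∃ y : N, x = p ^ n • y})) (k : ℕ) :
    IsInducing fun x : N => p ^ k • x := by
  have hinj : Function.Injective fun x : N => p ^ k • x := by
    simpa only [smul_iterate] using htf.iterate k
  exact (IsOpenEmbedding.of_continuous_injective_isOpenMap (continuous_const_smul _) hinj
    (isOpenMap_pow_nsmul hbasis k)).isInducing

end PAdic

theorem compactOpen_eq_padic_general
    (p : ℕ)
    (N : Type*) [AddCommGroup N] [TopologicalSpace N] [IsTopologicalAddGroup N]
    (htf : Function.Injective fun x : N => p • x)
    (hbasis : (nhds (0 : N)).HasBasis (fun _ : ℕ => True)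
      (fun n => {x : N | ∃ y : N, x = p ^ n • y}))
    (S : Type*) [TopologicalSpace S] [CompactSpace S] :
    (nhds (0 : C(S, N))).HasBasis (fun _ : ℕ => True)
      (fun n => {f : C(S, N) | ∃ g : C(S, N), f = p ^ n • g}) := by
  refine (hasBasis_nhds_const_of_compactSpace (X := S) hbasis).congr (fun _ => Iff.rfl)
    fun n _ => ?_
  ext f
  simpa [ContinuousMap.ext_iff] using
    exists_continuousMap_lift_iff (isInducing_pow_nsmul htf hbasis n) f

/-- Let `N` be a `p`-torsion-free, `p`-adically complete and separated topological abelian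
group whose topology is the `p`-adic one, and let `S` be a profinite space. Then the
subgroups `p^n · C(S,N)` form a neighbourhood basis of `0` for the compact-open topology on
`C(S, N)`: the compact-open topology coincides with the `p`-adic topology. -/
theorem compactOpen_eq_padic
    (p : ℕ) [Fact p.Prime]
    (N : Type*) [AddCommGroup N] [TopologicalSpace N] [IsTopologicalAddGroup N]
    (htf : Function.Injective fun x : N => p • x)
    (hbasis : (nhds (0 : N)).HasBasis (fun _ : ℕ => True)
      (fun n => {x : N | ∃ y : N, x = p ^ n • y}))
    (hcomplete : IsAdicComplete (Ideal.span {(p : ℤ)}) N)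
    (S : Type*) [TopologicalSpace S] [CompactSpace S] [T2Space S]
    [TotallyDisconnectedSpace S] :
    (nhds (0 : C(S, N))).HasBasis (fun _ : ℕ => True)
      (fun n => {f : C(S, N) | ∃ g : C(S, N), f = p ^ n • g}) :=
  compactOpen_eq_padic_general p N htf hbasis S

end Stmt10
end

section
/- Let p be a prime, let S be a profinite topological space, and let V be a normed ℚ_p-vector space. Equip the ℚ_p-vector space C(S,V) of continuous maps S → V with the supremum norm (which is finite on each element since S is compact). Then the ℚ_p-linear span of the functions of the form s ↦ φ(s) · v, where φ : S → ℚ_p is continuous and v ∈ V, is dense in C(S,V); in fact the span of such functions with φ locally constant is already dense. -/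
namespace Stmt12

/-- Let `S` be a profinite space and `V` a normed `ℚ_p`-vector space, and equip `C(S, V)`
with the supremum norm. Then the `ℚ_p`-linear span of the functions `s ↦ φ(s) • v` with
`φ : S → ℚ_p` continuous and `v ∈ V` is dense in `C(S, V)`; in fact the span of such
functions with `φ` locally constant is already dense. -/
theorem dense_span_simple_functions
    (p : ℕ) [Fact p.Prime]
    (S : Type*) [TopologicalSpace S] [CompactSpace S] [T2Space S]
    [TotallyDisconnectedSpace S]
    (V : Type*) [NormedAddCommGroup V] [NormedSpace ℚ_[p] V] :
    Dense (↑(Submodule.span ℚ_[p]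
        {f : C(S, V) | ∃ (φ : S → ℚ_[p]) (v : V),
          IsLocallyConstant φ ∧ ∀ s : S, f s = φ s • v}) : Set C(S, V)) ∧
    Dense (↑(Submodule.span ℚ_[p]
        {f : C(S, V) | ∃ (φ : C(S, ℚ_[p])) (v : V),
          ∀ s : S, f s = φ s • v}) : Set C(S, V)) := by
  classical
  have key : Dense (↑(Submodule.span ℚ_[p]
      {f : C(S, V) | ∃ (φ : S → ℚ_[p]) (v : V),
        IsLocallyConstant φ ∧ ∀ s : S, f s = φ s • v}) : Set C(S, V)) := by
    rw [Metric.dense_iff]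
    intro f ε hε
    -- clopen neighborhoods on which f varies by less than ε/2
    have hC : ∀ s : S, ∃ C : Set S, IsClopen C ∧ s ∈ C ∧
        C ⊆ f ⁻¹' Metric.ball (f s) (ε / 2) := by
      intro s
      exact compact_exists_isClopen_in_isOpen
        (f.continuous.isOpen_preimage _ Metric.isOpen_ball)
        (by simp [Metric.mem_ball]; positivity)
    choose C hCclopen hCmem hCsub using hC
    obtain ⟨t, ht⟩ := isCompact_univ.elim_finite_subcover C
      (fun s => (hCclopen s).isOpen)
      (fun x _ => Set.mem_iUnion.mpr ⟨x, hCmem x⟩)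
    set ι : S → Finset S := fun x => t.filter (fun s => x ∈ C s) with hιdef
    have hι : IsLocallyConstant ι := by
      rw [IsLocallyConstant.iff_exists_open]
      intro x
      refine ⟨⋂ s ∈ t, if x ∈ C s then C s else (C s)ᶜ, ?_, ?_, ?_⟩
      · refine isOpen_biInter_finset (fun s _ => ?_)
        split
        · exact (hCclopen s).isOpen
        · exact (hCclopen s).compl.isOpen
      · refine Set.mem_biInter (fun s _ => ?_)
        split
        · assumption
        · assumption
      · intro y hy
        have hy' : ∀ s ∈ t, (y ∈ C s ↔ x ∈ C s) := by
          intro s hs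
          have := Set.mem_iInter₂.mp hy s hs
          by_cases hxs : x ∈ C s
          · simp [hxs] at this; simp [hxs, this]
          · simp [hxs] at this; simp [hxs, this]
        simp only [hιdef]
        ext s
        simp only [Finset.mem_filter]
        exact ⟨fun ⟨hs, h2⟩ => ⟨hs, (hy' s hs).mp h2⟩,
               fun ⟨hs, h2⟩ => ⟨hs, (hy' s hs).mpr h2⟩⟩
    have hne : ∀ x : S, (ι x).Nonempty := by
      intro x
      obtain ⟨s, hst, hxs⟩ := Set.mem_iUnion₂.mp (ht (Set.mem_univ x))
      exact ⟨s, Finset.mem_filter.mpr ⟨hst, hxs⟩⟩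
    set gval : Finset S → V := fun A => if hA : A.Nonempty then f hA.choose else 0
      with hgval
    set h : S → V := fun x => gval (ι x) with hh
    have hhlc : IsLocallyConstant h := hι.comp gval
    have happrox : ∀ x : S, dist (f x) (h x) < ε / 2 := by
      intro x
      have hA := hne x
      have hmem : hA.choose ∈ ι x := hA.choose_spec
      have hxC : x ∈ C hA.choose := (Finset.mem_filter.mp hmem).2
      have := hCsub hA.choose hxC
      simp only [Set.mem_preimage, Metric.mem_ball] at this
      have hhx : h x = f hA.choose := by simp [hh, hgval, hA]
      rw [hhx]
      exact this
    set H : C(S, V) := ⟨h, hhlc.continuous⟩ with hH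
    have hsimple : ∀ A : Finset S, IsLocallyConstant
        (fun x => if ι x = A then (1 : ℚ_[p]) else 0) :=
      fun A => hι.comp (fun B => if B = A then (1 : ℚ_[p]) else 0)
    set simple : Finset S → C(S, V) := fun A =>
      ⟨fun x => (if ι x = A then (1 : ℚ_[p]) else 0) • gval A,
        ((hsimple A).continuous).smul continuous_const⟩ with hsimpledef
    have hHsum : H = ∑ A ∈ t.powerset, simple A := by
      ext x
      have hmem : ι x ∈ t.powerset := by
        simp only [Finset.mem_powerset, hιdef]
        exact Finset.filter_subset _ _
      simp only [hH, ContinuousMap.coe_mk, ContinuousMap.coe_sum, Finset.sum_apply,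
        hsimpledef, ite_smul, one_smul, zero_smul]
      rw [Finset.sum_ite_eq t.powerset (ι x) gval, if_pos hmem]
    have hHmem : H ∈ Submodule.span ℚ_[p]
        {f : C(S, V) | ∃ (φ : S → ℚ_[p]) (v : V),
          IsLocallyConstant φ ∧ ∀ s : S, f s = φ s • v} := by
      rw [hHsum]
      refine Submodule.sum_mem _ (fun A _ => Submodule.subset_span ?_)
      exact ⟨fun x => if ι x = A then (1 : ℚ_[p]) else 0, gval A, hsimple A,
        fun s => rfl⟩
    refine ⟨H, ?_, hHmem⟩
    rw [Metric.mem_ball, dist_comm]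
    rw [ContinuousMap.dist_lt_iff hε]
    intro x
    exact lt_trans (happrox x) (by linarith)
  refine ⟨key, key.mono ?_⟩
  refine SetLike.coe_subset_coe.mpr (Submodule.span_mono ?_)
  rintro f ⟨φ, v, hφ, hf⟩
  exact ⟨⟨φ, hφ.continuous⟩, v, hf⟩

end Stmt12
end
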